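/- Let G be an undirected connected graph on nodes 1,…,N, let f, B, C satisfy the Assumption (OFP), and let xᵢ, kᵢⱼ be a continuously differentiable solution of the adaptively coupled system with xᵢ(t) ∈ X for all t in an interval [0,T). Then for all t ∈ [0,T), ∑_{i=1}^N x̃ᵢ(t)ᵀ·P·x̃ᵢ(t) ≤ V(0), where V(0) = ∑_{i=1}^N x̃ᵢ(0)ᵀ·P·x̃ᵢ(0) + ∑_{i=1}^N ∑_{j=1}^N (1/(2γᵢⱼ))·(kᵢⱼ(0) − k*ᵢⱼ)² for any fixed k* with 2·k*·λ₂ > θ, λ₂ the second-smallest eigenvalue of the Laplacian of G, and k*ᵢⱼ = k* on edges of G and 0 otherwise. In particular, the deviations x̃ᵢ(t) = xᵢ(t) − (1/N)∑ⱼxⱼ(t) are bounded on [0,T) with a bound depending only on the initial conditions and not on T. -/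

import Mathlib

open Matrix

/-!
Along a solution, `V(t) = ∑ᵢ x̃ᵢᵀ P x̃ᵢ + ∑ᵢⱼ (kᵢⱼ - k*ᵢⱼ)² / (2γᵢⱼ)` is nonincreasing, and its
second sum is nonnegative. In `V'` the adaptive gains cancel: since `P B = Cᵀ` and `k` is
symmetric, the coupling contributes `-∑ᵢⱼ kᵢⱼ |yᵢ - yⱼ|²`, which the adaptation law exactly
offsets. What remains is `2 ∑ᵢ x̃ᵢᵀ P f(xᵢ) - k* ∑_{i ~ j} |yᵢ - yⱼ|²`. As `∑ᵢ x̃ᵢ = 0`, the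
first term equals `2 ∑ᵢ x̃ᵢᵀ P (f(xᵢ) - f(x̄))`, which the mean value theorem on segments of the
convex set `X` and the LMI bound by `θ ∑ᵢ |C x̃ᵢ|²`; as `∑ᵢ C x̃ᵢ = 0`, the spectral gap of the
Laplacian bounds the second from below by `2 k* λ₂ ∑ᵢ |C x̃ᵢ|²`. Hence `V' ≤ 0` when `θ < 2 k* λ₂`.
-/

theorem Matrix.IsSymm.dotProduct_mulVec_comm {m : Type*} [Fintype m] {P : Matrix m m ℝ}
    (hP : P.IsSymm) (u v : m → ℝ) : u ⬝ᵥ (P *ᵥ v) = v ⬝ᵥ (P *ᵥ u) := by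
  rw [dotProduct_mulVec, ← mulVec_transpose, hP.eq, dotProduct_comm]

theorem Matrix.IsSymm.dotProduct_mul_add_transpose_mul_mulVec {m : Type*} [Fintype m]
    {P : Matrix m m ℝ} (hP : P.IsSymm) (A : Matrix m m ℝ) (v : m → ℝ) :
    v ⬝ᵥ ((P * A + Aᵀ * P) *ᵥ v) = 2 * (v ⬝ᵥ (P *ᵥ (A *ᵥ v))) := by
  rw [add_mulVec, dotProduct_add, ← mulVec_mulVec, ← mulVec_mulVec, dotProduct_mulVec v Aᵀ,
    vecMul_transpose, hP.dotProduct_mulVec_comm (A *ᵥ v)]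
  ring

section Calculus

variable {l m : Type*} [Fintype m] {u v : ℝ → m → ℝ} {u' v' : m → ℝ} {t : ℝ}

theorem HasDerivAt.dotProduct (hu : HasDerivAt u u' t) (hv : HasDerivAt v v' t) :
    HasDerivAt (fun s => u s ⬝ᵥ v s) (u' ⬝ᵥ v t + u t ⬝ᵥ v') t := by
  have hu := hasDerivAt_pi.1 hu
  have hv := hasDerivAt_pi.1 hv
  simp only [_root_.dotProduct, ← Finset.sum_add_distrib]
  exact HasDerivAt.fun_sum fun i _ => (hu i).mul (hv i)

theorem HasDerivAt.mulVec (A : Matrix l m ℝ) (hu : HasDerivAt u u' t) :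
    HasDerivAt (fun s => A *ᵥ u s) (A *ᵥ u') t :=
  hasDerivAt_pi.2 fun i => by
    have h := (hasDerivAt_const t (A i)).dotProduct hu
    rw [zero_dotProduct, zero_add] at h
    exact h

theorem HasDerivAt.dotProduct_mulVec_self {P : Matrix m m ℝ} (hP : P.IsSymm)
    (hu : HasDerivAt u u' t) :
    HasDerivAt (fun s => u s ⬝ᵥ (P *ᵥ u s)) (2 * (u t ⬝ᵥ (P *ᵥ u'))) t := by
  convert hu.dotProduct (hu.mulVec P) using 1
  rw [hP.dotProduct_mulVec_comm u']
  ring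

theorem antitoneOn_Ico_of_hasDerivAt_nonpos {g g' : ℝ → ℝ} {a b : ℝ}
    (hg : ∀ s ∈ Set.Ico a b, HasDerivAt g (g' s) s) (hg' : ∀ s ∈ Set.Ico a b, g' s ≤ 0) :
    AntitoneOn g (Set.Ico a b) := by
  have hIoo : Set.Ioo a b ⊆ Set.Ico a b := Set.Ioo_subset_Ico_self
  refine antitoneOn_of_hasDerivWithinAt_nonpos (f' := g') (convex_Ico a b)
    (fun s hs => (hg s hs).continuousAt.continuousWithinAt) (fun s hs => ?_) (fun s hs => ?_)
  · rw [interior_Ico] at hs ⊢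
    exact (hg s (hIoo hs)).hasDerivWithinAt
  · rw [interior_Ico] at hs
    exact hg' s (hIoo hs)

end Calculus

open scoped RealInnerProductSpace in
theorem LinearMap.IsSymmetric.mul_norm_sq_le_inner_apply_self
    {E : Type*} [NormedAddCommGroup E] [InnerProductSpace ℝ E] [FiniteDimensional ℝ E]
    {T : E →ₗ[ℝ] E} (hT : T.IsSymmetric) {c : ℝ} {w : E}
    (hw : ∀ μ v, T v = μ • v → μ < c → ⟪v, w⟫ = 0) :
    c * ‖w‖ ^ 2 ≤ ⟪T w, w⟫ := by
  set b := hT.eigenvectorBasis rfl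
  set μ := hT.eigenvalues rfl
  have hTb : ∀ i, T (b i) = μ i • b i := hT.apply_eigenvectorBasis rfl
  have hquad : ⟪T w, w⟫ = ∑ i, μ i * ⟪b i, w⟫ ^ 2 := by
    rw [← b.sum_inner_mul_inner]
    refine Finset.sum_congr rfl fun i _ => ?_
    rw [hT, hTb, real_inner_smul_right, real_inner_comm w]
    ring
  rw [hquad, ← b.sum_sq_inner_right, Finset.mul_sum]
  refine Finset.sum_le_sum fun i _ => ?_
  rcases lt_or_ge (μ i) c with hlt | hge
  · simp [hw _ _ (hTb i) hlt]
  · exact mul_le_mul_of_nonneg_right hge (sq_nonneg _)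

theorem Matrix.IsSymm.mul_dotProduct_self_le_dotProduct_mulVec
    {V : Type*} [Fintype V] [DecidableEq V] {A : Matrix V V ℝ} (hA : A.IsSymm) {c : ℝ}
    {w : V → ℝ} (hw : ∀ μ v, A *ᵥ v = μ • v → μ < c → v ⬝ᵥ w = 0) :
    c * (w ⬝ᵥ w) ≤ w ⬝ᵥ (A *ᵥ w) := by
  have hT : (toEuclideanLin A).IsSymmetric := by
    rwa [isSymmetric_toEuclideanLin_iff, IsHermitian, conjTranspose_eq_transpose_of_trivial]
  have key := hT.mul_norm_sq_le_inner_apply_self (c := c)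
    (w := (WithLp.toLp 2 w : EuclideanSpace ℝ V)) fun μ v hv hμ => by
      simpa [EuclideanSpace.inner_eq_star_dotProduct, dotProduct_comm] using
        hw μ v.ofLp (by simpa using congrArg WithLp.ofLp hv) hμ
  rwa [← real_inner_self_eq_norm_sq] at key

namespace SimpleGraph

variable {V : Type*} [Fintype V] [DecidableEq V] {G : SimpleGraph V} [DecidableRel G.Adj]

theorem Connected.mul_dotProduct_self_le_dotProduct_lapMatrix_mulVec (hG : G.Connected)
    {lam2 : ℝ}
    (hlam2 : ∀ μ : ℝ, (∃ v : V → ℝ, v ≠ 0 ∧ G.lapMatrix ℝ *ᵥ v = μ • v) → μ = 0 ∨ lam2 ≤ μ)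
    {w : V → ℝ} (hw : ∑ i, w i = 0) :
    lam2 * (w ⬝ᵥ w) ≤ w ⬝ᵥ (G.lapMatrix ℝ *ᵥ w) := by
  refine (isSymm_lapMatrix ℝ G).mul_dotProduct_self_le_dotProduct_mulVec fun μ v hv hμ => ?_
  obtain rfl | hv0 := eq_or_ne v 0
  · exact zero_dotProduct w
  obtain rfl : μ = 0 := (hlam2 μ ⟨v, hv0, hv⟩).resolve_right hμ.not_ge
  have hconst := (lapMatrix_mulVec_eq_zero_iff_forall_reachable G).1 (by simpa using hv)
  obtain ⟨i₀⟩ := hG.nonempty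
  calc v ⬝ᵥ w = v i₀ * ∑ i, w i := by
        simp only [dotProduct, Finset.mul_sum, hconst _ i₀ (hG.preconnected _ _)]
    _ = 0 := by rw [hw, mul_zero]

theorem Connected.two_mul_mul_sum_dotProduct_self_le {q : Type*} [Fintype q] (hG : G.Connected)
    {lam2 : ℝ}
    (hlam2 : ∀ μ : ℝ, (∃ v : V → ℝ, v ≠ 0 ∧ G.lapMatrix ℝ *ᵥ v = μ • v) → μ = 0 ∨ lam2 ≤ μ)
    {Y : V → q → ℝ} (hY : ∑ i, Y i = 0) :
    2 * lam2 * ∑ i, Y i ⬝ᵥ Y i ≤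
      ∑ i, ∑ j, if G.Adj i j then (Y i - Y j) ⬝ᵥ (Y i - Y j) else 0 := by
  have hcoord : ∀ c, 2 * lam2 * ∑ i, Y i c ^ 2 ≤
      ∑ i, ∑ j, if G.Adj i j then (Y i c - Y j c) ^ 2 else 0 := by
    intro c
    have hgap := hG.mul_dotProduct_self_le_dotProduct_lapMatrix_mulVec hlam2 (w := fun i => Y i c)
      (by simpa using congrFun hY c)
    have hlap := lapMatrix_toLinearMap₂' ℝ G fun i => Y i c
    have hsq : ((fun i => Y i c) ⬝ᵥ fun i => Y i c) = ∑ i, Y i c ^ 2 := by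
      simp only [dotProduct, sq]
    rw [toLinearMap₂'_apply'] at hlap
    rw [hsq] at hgap
    linarith
  calc 2 * lam2 * ∑ i, Y i ⬝ᵥ Y i = ∑ c, 2 * lam2 * ∑ i, Y i c ^ 2 := by
        simp only [dotProduct, ← sq, ← Finset.mul_sum]
        rw [Finset.sum_comm]
    _ ≤ ∑ c, ∑ i, ∑ j, if G.Adj i j then (Y i c - Y j c) ^ 2 else 0 :=
        Finset.sum_le_sum fun c _ => hcoord c
    _ = _ := by
        rw [Finset.sum_comm]
        refine Finset.sum_congr rfl fun i _ => ?_
        rw [Finset.sum_comm]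
        refine Finset.sum_congr rfl fun j _ => ?_
        split_ifs <;> simp [dotProduct, sq]

end SimpleGraph

theorem two_mul_dotProduct_mulVec_sub_le_of_lmi {m q : Type*} [Fintype m] [Fintype q]
    {f : (m → ℝ) → m → ℝ} {J : (m → ℝ) → Matrix m m ℝ}
    (hf : ∀ z, HasFDerivAt f (J z).mulVecLin.toContinuousLinearMap z)
    {C : Matrix q m ℝ} {X : Set (m → ℝ)} (hX : Convex ℝ X) {θ : ℝ} {P : Matrix m m ℝ}
    (hP : P.IsSymm)
    (hLMI : ∀ z ∈ X, ∀ v : m → ℝ,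
      v ⬝ᵥ ((P * J z + (J z)ᵀ * P) *ᵥ v) ≤ θ * ((C *ᵥ v) ⬝ᵥ (C *ᵥ v)))
    {a b : m → ℝ} (ha : a ∈ X) (hb : b ∈ X) :
    2 * ((a - b) ⬝ᵥ (P *ᵥ (f a - f b))) ≤ θ * ((C *ᵥ (a - b)) ⬝ᵥ (C *ᵥ (a - b))) := by
  set v := a - b
  have hsegment : ∀ s : ℝ, HasDerivAt (fun s : ℝ => b + s • v) v s := fun s => by
    simpa using ((hasDerivAt_id s).smul_const v).const_add b
  have hg : ∀ s : ℝ, HasDerivAt (fun s : ℝ => v ⬝ᵥ (P *ᵥ f (b + s • v)))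
      (v ⬝ᵥ (P *ᵥ (J (b + s • v) *ᵥ v))) s := fun s => by
    simpa using (hasDerivAt_const s v).dotProduct
      (((hf _).comp_hasDerivAt s (hsegment s)).mulVec P)
  obtain ⟨c, hc, hslope⟩ := exists_hasDerivAt_eq_slope _ _ zero_lt_one
    (fun s _ => (hg s).continuousAt.continuousWithinAt) fun s _ => hg s
  have hmem : b + c • v ∈ X := hX.add_smul_sub_mem hb ha (Set.Ioo_subset_Icc_self hc)
  have hLMIc := hLMI _ hmem v
  rw [hP.dotProduct_mul_add_transpose_mul_mulVec, hslope] at hLMIc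
  simpa [v, mulVec_sub, dotProduct_sub] using hLMIc

section Deviation

variable {ι : Type*} [Fintype ι]

noncomputable def deviation {E : Type*} [AddCommGroup E] [Module ℝ E] (a : ι → E) (i : ι) : E :=
  a i - (Fintype.card ι : ℝ)⁻¹ • ∑ j, a j

variable {E : Type*} [AddCommGroup E] [Module ℝ E]

theorem sum_deviation (a : ι → E) : ∑ i, deviation a i = 0 := by
  rcases isEmpty_or_nonempty ι with hι | hι
  · simp
  · simp [deviation, Finset.sum_sub_distrib, Finset.card_univ, ← Nat.cast_smul_eq_nsmul ℝ,
      smul_smul]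

theorem deviation_sub_deviation (a : ι → E) (i j : ι) :
    deviation a i - deviation a j = a i - a j := by
  simp [deviation]

theorem Convex.inv_card_smul_sum_mem [Nonempty ι] {X : Set E} (hX : Convex ℝ X) {a : ι → E}
    (ha : ∀ i, a i ∈ X) : (Fintype.card ι : ℝ)⁻¹ • ∑ i, a i ∈ X := by
  rw [Finset.smul_sum]
  exact hX.sum_mem (fun _ _ => by positivity) (by simp [Finset.card_univ]) fun i _ => ha i

theorem sum_deviation_dotProduct_sub {m : Type*} [Fintype m] (a v : ι → m → ℝ) (w : m → ℝ) :
    ∑ i, deviation a i ⬝ᵥ (v i - w) = ∑ i, deviation a i ⬝ᵥ v i := by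
  simp only [dotProduct_sub, Finset.sum_sub_distrib, ← sum_dotProduct, sum_deviation,
    zero_dotProduct, sub_zero]

end Deviation

theorem Matrix.PosSemidef.nonneg_of_mulVec_eq_smul {n : Type*} [Fintype n] {A : Matrix n n ℝ}
    (hA : A.PosSemidef) {μ : ℝ} {v : n → ℝ} (hv0 : v ≠ 0) (hv : A *ᵥ v = μ • v) : 0 ≤ μ := by
  have h := hA.dotProduct_mulVec_nonneg v
  rw [hv, dotProduct_smul, smul_eq_mul] at h
  exact nonneg_of_mul_nonneg_left h (dotProduct_star_self_pos_iff.2 hv0)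

theorem two_mul_sum_dotProduct_sum_smul_sub {V q : Type*} [Fintype V] [Fintype q]
    {κ : V → V → ℝ} (hκ : ∀ i j, κ i j = κ j i) (Y : V → q → ℝ) :
    2 * ∑ i, Y i ⬝ᵥ ∑ j, κ i j • (Y j - Y i) =
      -∑ i, ∑ j, κ i j * ((Y i - Y j) ⬝ᵥ (Y i - Y j)) := by
  have hpair : ∀ i j, Y i ⬝ᵥ (Y j - Y i) + Y j ⬝ᵥ (Y i - Y j) = -((Y i - Y j) ⬝ᵥ (Y i - Y j)) := by
    intro i j
    simp only [dotProduct_sub, sub_dotProduct, dotProduct_comm (Y j) (Y i)]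
    ring
  have hswap : ∑ i, ∑ j, κ i j * (Y i ⬝ᵥ (Y j - Y i)) =
      ∑ i, ∑ j, κ i j * (Y j ⬝ᵥ (Y i - Y j)) := by
    rw [Finset.sum_comm]
    simp only [hκ]
  simp only [dotProduct_sum, dotProduct_smul, smul_eq_mul]
  rw [two_mul]
  nth_rw 2 [hswap]
  simp only [← Finset.sum_add_distrib, ← mul_add, hpair, mul_neg, Finset.sum_neg_distrib]

section Lyapunov

variable {V m : Type*} [Fintype V] [Fintype m]

noncomputable def disagreement (P : Matrix m m ℝ) (a : V → m → ℝ) : ℝ :=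
  ∑ i, deviation a i ⬝ᵥ (P *ᵥ deviation a i)

noncomputable def couplingGainError (G : SimpleGraph V) [DecidableRel G.Adj] (kstar : ℝ)
    (γ κ : V → V → ℝ) : ℝ :=
  ∑ i, ∑ j, 1 / (2 * γ i j) * (κ i j - if G.Adj i j then kstar else 0) ^ 2

theorem hasDerivAt_disagreement {P : Matrix m m ℝ} (hP : P.IsSymm) {x : V → ℝ → m → ℝ}
    {x' : V → m → ℝ} {t : ℝ} (hx : ∀ i, HasDerivAt (x i) (x' i) t) :
    HasDerivAt (fun s => disagreement P fun i => x i s)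
      (2 * ∑ i, deviation (fun i => x i t) i ⬝ᵥ (P *ᵥ x' i)) t := by
  have hdev : ∀ i, HasDerivAt (fun s => deviation (fun j => x j s) i) (deviation x' i) t :=
    fun i => (hx i).sub ((HasDerivAt.fun_sum fun j _ => hx j).fun_const_smul _)
  refine (HasDerivAt.fun_sum fun i _ => (hdev i).dotProduct_mulVec_self hP).congr_deriv ?_
  have hx' : ∀ i, P *ᵥ deviation x' i = P *ᵥ x' i - P *ᵥ ((Fintype.card V : ℝ)⁻¹ • ∑ j, x' j) :=
    fun i => mulVec_sub _ _ _
  simp only [← Finset.mul_sum, hx', sum_deviation_dotProduct_sub]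

variable {G : SimpleGraph V} [DecidableRel G.Adj] {kstar : ℝ} {γ : V → V → ℝ}

theorem hasDerivAt_couplingGainError (hγ : ∀ i j, G.Adj i j → γ i j ≠ 0)
    {k : V → V → ℝ → ℝ} (hk0 : ∀ i j, ¬ G.Adj i j → ∀ s, k i j s = 0) {D : V → V → ℝ} {t : ℝ}
    (hk : ∀ i j, G.Adj i j → HasDerivAt (k i j) (γ i j * D i j) t) :
    HasDerivAt (fun s => couplingGainError G kstar γ fun i j => k i j s)
      (∑ i, ∑ j, (k i j t - if G.Adj i j then kstar else 0) * D i j) t := by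
  refine HasDerivAt.fun_sum fun i _ => HasDerivAt.fun_sum fun j _ => ?_
  by_cases hij : G.Adj i j
  · simp only [hij, if_true]
    refine ((((hk i j hij).sub_const kstar).fun_pow 2).const_mul _).congr_deriv ?_
    field_simp [hγ i j hij]
    ring
  · simp only [hij, if_false, hk0 i j hij]
    simpa using hasDerivAt_const t (0 : ℝ)

theorem couplingGainError_nonneg (hγ : ∀ i j, G.Adj i j → 0 < γ i j) {κ : V → V → ℝ}
    (hκ : ∀ i j, ¬ G.Adj i j → κ i j = 0) : 0 ≤ couplingGainError G kstar γ κ := by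
  refine Finset.sum_nonneg fun i _ => Finset.sum_nonneg fun j _ => ?_
  by_cases hij : G.Adj i j
  · have := hγ i j hij
    positivity
  · simp [hij, hκ i j hij]

end Lyapunov

section ClosedLoop

variable {V m q : Type*} [Fintype V] [Fintype m]

theorem mulVec_deviation_sub_mulVec_deviation (C : Matrix q m ℝ) (a : V → m → ℝ) (i j : V) :
    C *ᵥ deviation a i - C *ᵥ deviation a j = C *ᵥ a i - C *ᵥ a j := by
  rw [← mulVec_sub, ← mulVec_sub, deviation_sub_deviation]

theorem two_mul_sum_deviation_dotProduct_mulVec_le [Fintype q] [Nonempty V]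
    {f : (m → ℝ) → m → ℝ} {J : (m → ℝ) → Matrix m m ℝ}
    (hf : ∀ z, HasFDerivAt f (J z).mulVecLin.toContinuousLinearMap z)
    {C : Matrix q m ℝ} {X : Set (m → ℝ)} (hX : Convex ℝ X) {θ : ℝ} {P : Matrix m m ℝ}
    (hP : P.IsSymm)
    (hLMI : ∀ z ∈ X, ∀ v : m → ℝ,
      v ⬝ᵥ ((P * J z + (J z)ᵀ * P) *ᵥ v) ≤ θ * ((C *ᵥ v) ⬝ᵥ (C *ᵥ v)))
    {a : V → m → ℝ} (ha : ∀ i, a i ∈ X) :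
    2 * ∑ i, deviation a i ⬝ᵥ (P *ᵥ f (a i)) ≤
      θ * ∑ i, (C *ᵥ deviation a i) ⬝ᵥ (C *ᵥ deviation a i) := by
  have hmean := hX.inv_card_smul_sum_mem ha
  calc 2 * ∑ i, deviation a i ⬝ᵥ (P *ᵥ f (a i))
      = ∑ i, 2 * (deviation a i ⬝ᵥ (P *ᵥ (f (a i) - f _))) := by
        simp only [mulVec_sub]
        rw [← Finset.mul_sum, sum_deviation_dotProduct_sub a fun i => P *ᵥ f (a i)]
    _ ≤ ∑ i, θ * ((C *ᵥ deviation a i) ⬝ᵥ (C *ᵥ deviation a i)) :=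
        Finset.sum_le_sum fun i _ =>
          two_mul_dotProduct_mulVec_sub_le_of_lmi hf hX hP hLMI (ha i) hmean
    _ = θ * ∑ i, (C *ᵥ deviation a i) ⬝ᵥ (C *ᵥ deviation a i) := by rw [Finset.mul_sum]

theorem two_mul_sum_deviation_dotProduct_coupling [Fintype q] {P : Matrix m m ℝ} {B : Matrix m q ℝ}
    {C : Matrix q m ℝ} (hPB : P * B = Cᵀ) {κ : V → V → ℝ} (hκ : ∀ i j, κ i j = κ j i)
    (a : V → m → ℝ) :
    2 * ∑ i, deviation a i ⬝ᵥ (P *ᵥ (B *ᵥ ∑ j, κ i j • (C *ᵥ a j - C *ᵥ a i))) =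
      -∑ i, ∑ j, κ i j * ((C *ᵥ a i - C *ᵥ a j) ⬝ᵥ (C *ᵥ a i - C *ᵥ a j)) := by
  simp only [mulVec_mulVec, hPB, dotProduct_mulVec, vecMul_transpose,
    ← mulVec_deviation_sub_mulVec_deviation C a]
  exact two_mul_sum_dotProduct_sum_smul_sub hκ _

/-- The left-hand side is the derivative of `disagreement P x + couplingGainError G kstar γ k`
along the closed loop, at states `a` and gains `κ`. -/
theorem closedLoop_lyapunov_deriv_nonpos [Fintype q] [DecidableEq V] {G : SimpleGraph V}
    [DecidableRel G.Adj] (hG : G.Connected) {lam2 : ℝ}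
    (hlam2 : ∀ μ : ℝ, (∃ v : V → ℝ, v ≠ 0 ∧ G.lapMatrix ℝ *ᵥ v = μ • v) → μ = 0 ∨ lam2 ≤ μ)
    {f : (m → ℝ) → m → ℝ} {J : (m → ℝ) → Matrix m m ℝ}
    (hf : ∀ z, HasFDerivAt f (J z).mulVecLin.toContinuousLinearMap z)
    {B : Matrix m q ℝ} {C : Matrix q m ℝ} {X : Set (m → ℝ)} (hX : Convex ℝ X) {θ : ℝ}
    {P : Matrix m m ℝ} (hP : P.IsSymm)
    (hLMI : ∀ z ∈ X, ∀ v : m → ℝ,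
      v ⬝ᵥ ((P * J z + (J z)ᵀ * P) *ᵥ v) ≤ θ * ((C *ᵥ v) ⬝ᵥ (C *ᵥ v)))
    (hPB : P * B = Cᵀ) {kstar : ℝ} (hkstar : 0 ≤ kstar) (hθ : θ ≤ 2 * kstar * lam2)
    {κ : V → V → ℝ} (hκ : ∀ i j, κ i j = κ j i) {a : V → m → ℝ} (ha : ∀ i, a i ∈ X) :
    2 * ∑ i, deviation a i ⬝ᵥ (P *ᵥ (f (a i) + B *ᵥ ∑ j, κ i j • (C *ᵥ a j - C *ᵥ a i))) +
      ∑ i, ∑ j, (κ i j - if G.Adj i j then kstar else 0) *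
        ((C *ᵥ a i - C *ᵥ a j) ⬝ᵥ (C *ᵥ a i - C *ᵥ a j)) ≤ 0 := by
  have := hG.nonempty
  have hY : ∑ i, C *ᵥ deviation a i = 0 := by rw [← mulVec_sum, sum_deviation, mulVec_zero]
  have henergy := hG.two_mul_mul_sum_dotProduct_self_le hlam2 hY
  simp only [mulVec_deviation_sub_mulVec_deviation] at henergy
  have hdrift := two_mul_sum_deviation_dotProduct_mulVec_le hf hX hP hLMI ha
  have hcoupling := two_mul_sum_deviation_dotProduct_coupling hPB hκ a
  have hQ : 0 ≤ ∑ i, (C *ᵥ deviation a i) ⬝ᵥ (C *ᵥ deviation a i) :=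
    Finset.sum_nonneg fun i _ => dotProduct_star_self_nonneg _
  have hgain : ∑ i, ∑ j, (κ i j - if G.Adj i j then kstar else 0) *
        ((C *ᵥ a i - C *ᵥ a j) ⬝ᵥ (C *ᵥ a i - C *ᵥ a j)) =
      ∑ i, ∑ j, κ i j * ((C *ᵥ a i - C *ᵥ a j) ⬝ᵥ (C *ᵥ a i - C *ᵥ a j)) - kstar *
        ∑ i, ∑ j, if G.Adj i j then (C *ᵥ a i - C *ᵥ a j) ⬝ᵥ (C *ᵥ a i - C *ᵥ a j) else 0 := by
    simp only [sub_mul, Finset.sum_sub_distrib, Finset.mul_sum, ite_mul, zero_mul, mul_ite,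
      mul_zero]
  simp only [mulVec_add, dotProduct_add, Finset.sum_add_distrib, mul_add]
  rw [hcoupling, hgain]
  nlinarith [mul_le_mul_of_nonneg_left henergy hkstar, mul_le_mul_of_nonneg_right hθ hQ]

end ClosedLoop

theorem deviations_bounded_by_initial_lyapunov_general
    {n p N : ℕ}
    (G : SimpleGraph (Fin N)) [DecidableRel G.Adj] (hG : G.Connected)
    (f : (Fin n → ℝ) → (Fin n → ℝ))
    (J : (Fin n → ℝ) → Matrix (Fin n) (Fin n) ℝ)
    (hf : ∀ z, HasFDerivAt f ((J z).mulVecLin.toContinuousLinearMap) z)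
    (B : Matrix (Fin n) (Fin p) ℝ) (C : Matrix (Fin p) (Fin n) ℝ)
    -- Assumption (OFP)
    (X : Set (Fin n → ℝ)) (hX : Convex ℝ X)
    (θ : ℝ) (hθ : 0 < θ)
    (P : Matrix (Fin n) (Fin n) ℝ) (hP : P.PosDef)
    (hLMI : ∀ z ∈ X, ∀ v : Fin n → ℝ,
      v ⬝ᵥ ((P * J z + (J z)ᵀ * P) *ᵥ v) ≤ θ * ((C *ᵥ v) ⬝ᵥ (C *ᵥ v)))
    (hPB : P * B = Cᵀ)
    -- `lam2` is the second-smallest eigenvalue of the Laplacian of `G`: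
    (lam2 : ℝ)
    (hlam_eig : ∃ v : Fin N → ℝ, v ≠ 0 ∧ (G.lapMatrix ℝ) *ᵥ v = lam2 • v)
    (hlam_min : ∀ μ : ℝ, (∃ v : Fin N → ℝ, v ≠ 0 ∧ (G.lapMatrix ℝ) *ᵥ v = μ • v) →
      μ = 0 ∨ lam2 ≤ μ)
    -- the constant `k*` with `2 k* λ₂ > θ`
    (kstar : ℝ) (hkstar : θ < 2 * kstar * lam2)
    -- a continuously differentiable solution of the adaptively coupled system on `[0,T)`
    (T : ℝ)
    (x : Fin N → ℝ → (Fin n → ℝ)) (k : Fin N → Fin N → ℝ → ℝ)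
    (γ : Fin N → Fin N → ℝ)
    (hγpos : ∀ i j, G.Adj i j → 0 < γ i j)
    (hksym : ∀ i j t, k i j t = k j i t)
    (hknonadj : ∀ i j, ¬ G.Adj i j → ∀ t, k i j t = 0)
    (hxode : ∀ i, ∀ t, 0 ≤ t → t < T →
      HasDerivAt (x i)
        (f (x i t) + B *ᵥ (∑ j, k i j t • (C *ᵥ x j t - C *ᵥ x i t))) t)
    (hkode : ∀ i j, G.Adj i j → ∀ t, 0 ≤ t → t < T →
      HasDerivAt (k i j)
        (γ i j * ((C *ᵥ x i t - C *ᵥ x j t) ⬝ᵥ (C *ᵥ x i t - C *ᵥ x j t))) t)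
    (hXinv : ∀ i, ∀ t, 0 ≤ t → t < T → x i t ∈ X) :
    -- conclusion: the quadratic deviation term stays below the initial Lyapunov value
    ∀ t, 0 ≤ t → t < T →
      ∑ i, ((x i t - (N : ℝ)⁻¹ • ∑ j, x j t) ⬝ᵥ
          (P *ᵥ (x i t - (N : ℝ)⁻¹ • ∑ j, x j t))) ≤
        (∑ i, ((x i 0 - (N : ℝ)⁻¹ • ∑ j, x j 0) ⬝ᵥ
          (P *ᵥ (x i 0 - (N : ℝ)⁻¹ • ∑ j, x j 0)))) +
        ∑ i, ∑ j, (1 / (2 * γ i j)) *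
          (k i j 0 - (if G.Adj i j then kstar else 0)) ^ 2 := by
  intro t ht0 htT
  have hPsymm : P.IsSymm := isHermitian_iff_isSymm.1 hP.isHermitian
  obtain ⟨v, hv0, hv⟩ := hlam_eig
  have hlam2 := (SimpleGraph.posSemidef_lapMatrix ℝ G).nonneg_of_mulVec_eq_smul hv0 hv
  have hkstar_nonneg : 0 ≤ kstar := by nlinarith
  have hmono := antitoneOn_Ico_of_hasDerivAt_nonpos
    (fun s hs => (hasDerivAt_disagreement hPsymm fun i => hxode i s hs.1 hs.2).add
      (hasDerivAt_couplingGainError (fun i j h => (hγpos i j h).ne') hknonadj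
        fun i j h => hkode i j h s hs.1 hs.2))
    (fun s hs => closedLoop_lyapunov_deriv_nonpos hG hlam_min hf hX hPsymm hLMI hPB
      hkstar_nonneg hkstar.le (fun i j => hksym i j s) fun i => hXinv i s hs.1 hs.2)
    ⟨le_rfl, ht0.trans_lt htT⟩ ⟨ht0, htT⟩ ht0
  have hgain := couplingGainError_nonneg (kstar := kstar) hγpos fun i j h => hknonadj i j h t
  simp only [disagreement, couplingGainError, deviation, Fintype.card_fin, Pi.add_apply]
    at hmono hgain
  linarith

/-- Uniform boundedness of the deviations from the Lyapunov function:
for the adaptively coupled system under Assumption (OFP) with states in `X` on `[0,T)`,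
and any `k*` with `2 k* λ₂ > θ` (λ₂ the second-smallest Laplacian eigenvalue),
`∑ᵢ x̃ᵢ(t)ᵀ P x̃ᵢ(t) ≤ V(0)` for all `t ∈ [0,T)`, where
`V(0) = ∑ᵢ x̃ᵢ(0)ᵀ P x̃ᵢ(0) + ∑ᵢ∑ⱼ (1/(2γᵢⱼ)) (kᵢⱼ(0) - k*ᵢⱼ)²`. -/
theorem deviations_bounded_by_initial_lyapunov
    {n p N : ℕ}
    (G : SimpleGraph (Fin N)) [DecidableRel G.Adj] (hG : G.Connected)
    (f : (Fin n → ℝ) → (Fin n → ℝ))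
    (J : (Fin n → ℝ) → Matrix (Fin n) (Fin n) ℝ)
    (hf : ∀ z, HasFDerivAt f ((J z).mulVecLin.toContinuousLinearMap) z)
    (hJcont : Continuous J)
    (B : Matrix (Fin n) (Fin p) ℝ) (C : Matrix (Fin p) (Fin n) ℝ)
    -- Assumption (OFP)
    (X : Set (Fin n → ℝ)) (hX : Convex ℝ X)
    (θ : ℝ) (hθ : 0 < θ)
    (P : Matrix (Fin n) (Fin n) ℝ) (hP : P.PosDef)
    (hLMI : ∀ z ∈ X, ∀ v : Fin n → ℝ,
      v ⬝ᵥ ((P * J z + (J z)ᵀ * P) *ᵥ v) ≤ θ * ((C *ᵥ v) ⬝ᵥ (C *ᵥ v)))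
    (hPB : P * B = Cᵀ)
    -- `lam2` is the second-smallest eigenvalue of the Laplacian of `G`:
    (lam2 : ℝ)
    (hlam_eig : ∃ v : Fin N → ℝ, v ≠ 0 ∧ (G.lapMatrix ℝ) *ᵥ v = lam2 • v)
    (hlam_min : ∀ μ : ℝ, (∃ v : Fin N → ℝ, v ≠ 0 ∧ (G.lapMatrix ℝ) *ᵥ v = μ • v) →
      μ = 0 ∨ lam2 ≤ μ)
    -- the constant `k*` with `2 k* λ₂ > θ`
    (kstar : ℝ) (hkstar : θ < 2 * kstar * lam2)
    -- a continuously differentiable solution of the adaptively coupled system on `[0,T)`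
    (T : ℝ)
    (x : Fin N → ℝ → (Fin n → ℝ)) (k : Fin N → Fin N → ℝ → ℝ)
    (γ : Fin N → Fin N → ℝ)
    (hγsym : ∀ i j, γ i j = γ j i)
    (hγpos : ∀ i j, G.Adj i j → 0 < γ i j)
    (hksym : ∀ i j t, k i j t = k j i t)
    (hknonadj : ∀ i j, ¬ G.Adj i j → ∀ t, k i j t = 0)
    (hxode : ∀ i, ∀ t, 0 ≤ t → t < T →
      HasDerivAt (x i)
        (f (x i t) + B *ᵥ (∑ j, k i j t • (C *ᵥ x j t - C *ᵥ x i t))) t)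
    (hkode : ∀ i j, G.Adj i j → ∀ t, 0 ≤ t → t < T →
      HasDerivAt (k i j)
        (γ i j * ((C *ᵥ x i t - C *ᵥ x j t) ⬝ᵥ (C *ᵥ x i t - C *ᵥ x j t))) t)
    (hXinv : ∀ i, ∀ t, 0 ≤ t → t < T → x i t ∈ X) :
    -- conclusion: the quadratic deviation term stays below the initial Lyapunov value
    ∀ t, 0 ≤ t → t < T →
      ∑ i, ((x i t - (N : ℝ)⁻¹ • ∑ j, x j t) ⬝ᵥ
          (P *ᵥ (x i t - (N : ℝ)⁻¹ • ∑ j, x j t))) ≤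
        (∑ i, ((x i 0 - (N : ℝ)⁻¹ • ∑ j, x j 0) ⬝ᵥ
          (P *ᵥ (x i 0 - (N : ℝ)⁻¹ • ∑ j, x j 0)))) +
        ∑ i, ∑ j, (1 / (2 * γ i j)) *
          (k i j 0 - (if G.Adj i j then kstar else 0)) ^ 2 :=
  deviations_bounded_by_initial_lyapunov_general G hG f J hf B C X hX θ hθ P hP hLMI hPB lam2
    hlam_eig hlam_min kstar hkstar T x k γ hγpos hksym hknonadj hxode hkode hXinv
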